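/- arXiv:1811.10457 — 2 statements merged into one kernel-verified Lean document; each statement's English description precedes it below -/
import Mathlib

section
/- Let G be a countable discrete group equipped with a proper left-invariant metric d (so all balls are finite), and let N₁ ⊇ N₂ ⊇ ⋯ be a nested sequence of finite-index normal subgroups with ⋂_i N_i = {e}. Equip each quotient G/N_i with the quotient metric d_i(xN_i, yN_i) = min_{n∈N_i} d(x, yn). Then for every ε > 0 there exists i₀ such that for all i ≥ i₀, the quotient map π_i : (G,d) → (G/N_i, d_i) is an ε-metric cover. -/
open Metric

noncomputable section

/-- The quotient metric on `G ⧸ N` induced by a left-invariant metric on `G`: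
`d(xN, yN) = inf { d(x', y') : x' ∈ xN, y' ∈ yN }`, which for a normal subgroup `N`
agrees with `min_{n ∈ N} d(x, y·n)`. -/
def qdist {G : Type} [Group G] [MetricSpace G] (N : Subgroup G) (a b : G ⧸ N) : ℝ :=
  sInf {r : ℝ | ∃ x y : G, QuotientGroup.mk x = a ∧ QuotientGroup.mk y = b ∧ dist x y = r}

/-- The quotient map `π : G → G ⧸ N` is an `ε`-metric cover: for every `x ∈ G`, `π`
restricted to the open ball `B(x,ε)` is an isometry (with respect to the quotient metric)
onto the open ball of radius `ε` around `π(x)` in `G ⧸ N`. -/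
def IsMetricCover {G : Type} [Group G] [MetricSpace G] (N : Subgroup G) (ε : ℝ) : Prop :=
  ∀ x : G,
    (∀ y ∈ ball x ε, ∀ z ∈ ball x ε,
      qdist N (QuotientGroup.mk y) (QuotientGroup.mk z) = dist y z) ∧
    Set.BijOn (fun g : G => (QuotientGroup.mk g : G ⧸ N)) (ball x ε)
      {b : G ⧸ N | qdist N (QuotientGroup.mk x) b < ε}

namespace MCaux


variable {G : Type} [Group G] [MetricSpace G]

lemma mem_qset_iff (N : Subgroup G) [hN : N.Normal]
    (hinv : ∀ g x y : G, dist (g * x) (g * y) = dist x y) (u v : G) (r : ℝ) :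
    (∃ x y : G, QuotientGroup.mk x = (QuotientGroup.mk u : G ⧸ N) ∧
      QuotientGroup.mk y = (QuotientGroup.mk v : G ⧸ N) ∧ dist x y = r)
      ↔ ∃ n ∈ N, dist u (v * n) = r := by
  constructor
  · rintro ⟨x, y, hx, hy, rfl⟩
    rw [QuotientGroup.eq] at hx hy
    refine ⟨v⁻¹ * u * x⁻¹ * y, ?_, ?_⟩
    · have : v⁻¹ * u * x⁻¹ * y = ((v⁻¹ * u) * (x⁻¹ * u) * (v⁻¹ * u)⁻¹) * (y⁻¹ * v)⁻¹ := by
        group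
      rw [this]
      exact mul_mem (hN.conj_mem _ hx _) (inv_mem hy)
    · have h := hinv (u * x⁻¹) x y
      rw [show u * x⁻¹ * x = u by group] at h
      rw [show v * (v⁻¹ * u * x⁻¹ * y) = u * x⁻¹ * y by group]
      exact h
  · rintro ⟨n, hn, rfl⟩
    refine ⟨u, v * n, rfl, QuotientGroup.eq.mpr ?_, rfl⟩
    simpa using inv_mem hn

lemma qset_nonempty (N : Subgroup G) (u v : G) :
    {r : ℝ | ∃ x y : G, QuotientGroup.mk x = (QuotientGroup.mk u : G ⧸ N) ∧
      QuotientGroup.mk y = (QuotientGroup.mk v : G ⧸ N) ∧ dist x y = r}.Nonempty :=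
  ⟨dist u v, u, v, rfl, rfl, rfl⟩

lemma qset_bdd (N : Subgroup G) (u v : G) :
    BddBelow {r : ℝ | ∃ x y : G, QuotientGroup.mk x = (QuotientGroup.mk u : G ⧸ N) ∧
      QuotientGroup.mk y = (QuotientGroup.mk v : G ⧸ N) ∧ dist x y = r} := by
  refine ⟨0, ?_⟩
  rintro r ⟨x, y, -, -, rfl⟩
  exact dist_nonneg

lemma qdist_eq (N : Subgroup G) [hN : N.Normal]
    (hinv : ∀ g x y : G, dist (g * x) (g * y) = dist x y) {ε : ℝ} (hε : 0 < ε)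
    (hsep : ∀ n ∈ N, n ≠ 1 → 4 * ε ≤ dist (1 : G) n)
    {u v : G} (huv : dist u v < 2 * ε) :
    qdist N (QuotientGroup.mk u) (QuotientGroup.mk v) = dist u v := by
  apply le_antisymm
  · exact csInf_le (qset_bdd N u v) ⟨u, v, rfl, rfl, rfl⟩
  · apply le_csInf (qset_nonempty N u v)
    rintro r hr
    obtain ⟨n, hn, rfl⟩ := (mem_qset_iff N hinv u v r).mp hr
    by_cases h1 : n = 1
    · simp [h1]
    · have h4 := hsep n hn h1
      have hdv : dist v (v * n) = dist 1 n := by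
        have := hinv v 1 n; simpa using this
      have ht := dist_triangle v u (v * n)
      have hc : dist v u = dist u v := dist_comm v u
      linarith

end MCaux

/-- if `G` is a countable discrete group with a proper left-invariant metric
and `N₁ ⊇ N₂ ⊇ ⋯` are finite-index normal subgroups with `⋂ᵢ Nᵢ = {e}`, then for every
`ε > 0` the quotient maps `πᵢ : G → G/Nᵢ` are eventually `ε`-metric covers. -/
theorem quotient_maps_eventually_metric_covers
    {G : Type} [Group G] [Countable G] [MetricSpace G]
    (hproper : ∀ (x : G) (r : ℝ), (Metric.ball x r).Finite)
    (hinv : ∀ g x y : G, dist (g * x) (g * y) = dist x y)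
    (N : ℕ → Subgroup G)
    (hnormal : ∀ i, (N i).Normal)
    (hfin : ∀ i, (N i).FiniteIndex)
    (hnested : ∀ i, N (i + 1) ≤ N i)
    (htriv : ∀ g : G, (∀ i, g ∈ N i) → g = 1) :
    ∀ ε : ℝ, 0 < ε → ∃ i₀ : ℕ, ∀ i, i₀ ≤ i → IsMetricCover (N i) ε := by
  classical
  intro ε hε
  have hmono : Antitone N := antitone_nat_of_succ_le hnested
  -- the finitely many "bad" elements
  set S : Set G := {g : G | dist (1 : G) g < 4 * ε ∧ g ≠ 1} with hSdef
  have hS : S.Finite := by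
    apply (hproper 1 (4 * ε)).subset
    rintro g ⟨h1, -⟩
    simpa [mem_ball, dist_comm] using h1
  have hex : ∀ g : G, g ≠ 1 → ∃ i, g ∉ N i := by
    intro g hg
    by_contra h
    push_neg at h
    exact hg (htriv g h)
  let f : G → ℕ := fun g => if h : ∃ i, g ∉ N i then h.choose else 0
  have hf : ∀ g : G, g ≠ 1 → g ∉ N (f g) := by
    intro g hg
    have h := hex g hg
    simp only [f, dif_pos h]
    exact h.choose_spec
  refine ⟨hS.toFinset.sup f, ?_⟩
  intro i hi
  have hsep : ∀ n ∈ N i, n ≠ 1 → 4 * ε ≤ dist (1 : G) n := by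
    intro n hn hne
    by_contra hlt
    push_neg at hlt
    have hnS : n ∈ S := ⟨hlt, hne⟩
    have hle : f n ≤ hS.toFinset.sup f := Finset.le_sup (hS.mem_toFinset.mpr hnS)
    exact hf n hne (hmono (hle.trans hi) hn)
  haveI := hnormal i
  intro x
  have hiso : ∀ y ∈ ball x ε, ∀ z ∈ ball x ε,
      qdist (N i) (QuotientGroup.mk y) (QuotientGroup.mk z) = dist y z := by
    intro y hy z hz
    rw [mem_ball] at hy hz
    have hyz : dist y z < 2 * ε := by
      have := dist_triangle y x z
      have h2 : dist x z = dist z x := dist_comm x z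
      linarith
    exact MCaux.qdist_eq (N i) hinv hε hsep hyz
  refine ⟨hiso, ?_, ?_, ?_⟩
  · -- MapsTo
    intro g hg
    have hxg : dist x g < ε := by rw [dist_comm]; exact mem_ball.mp hg
    have : qdist (N i) (QuotientGroup.mk x) (QuotientGroup.mk g) = dist x g :=
      MCaux.qdist_eq (N i) hinv hε hsep (by linarith)
    simpa [this] using hxg
  · -- InjOn
    intro y hy z hz h
    have hn : y⁻¹ * z ∈ N i := QuotientGroup.eq.mp h
    by_contra hne
    have hne1 : y⁻¹ * z ≠ 1 := fun h1 => hne (by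
      have : y * (y⁻¹ * z) = y * 1 := by rw [h1]
      simpa [mul_assoc] using this.symm)
    have h4 := hsep _ hn hne1
    have hd : dist 1 (y⁻¹ * z) = dist y z := by
      have := hinv y 1 (y⁻¹ * z)
      simpa [mul_assoc] using this.symm
    rw [mem_ball] at hy hz
    have := dist_triangle y x z
    have h2 : dist x z = dist z x := dist_comm x z
    linarith
  · -- SurjOn
    intro b hb
    obtain ⟨g, rfl⟩ := QuotientGroup.mk_surjective b
    have hb' : qdist (N i) (QuotientGroup.mk x) (QuotientGroup.mk g) < ε := hb
    obtain ⟨r, hr, hrε⟩ := exists_lt_of_csInf_lt (MCaux.qset_nonempty (N i) x g) hb'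
    obtain ⟨n, hn, rfl⟩ := (MCaux.mem_qset_iff (N i) hinv x g r).mp hr
    refine ⟨g * n, ?_, ?_⟩
    · rw [mem_ball, dist_comm]; exact hrε
    · show (QuotientGroup.mk (g * n) : G ⧸ N i) = QuotientGroup.mk g
      exact QuotientGroup.eq.mpr (by simpa using inv_mem hn)
end
end

section
/- Let p ∈ [1,∞), let G be a countable discrete group with a proper left-invariant metric d, let N ⊴ G be a finite-index normal subgroup with quotient map π : G → G/N, and equip G/N with the quotient metric. Let ε > 0 and suppose π is an ε-metric cover. Let r, s > 0 with r + s < ε, and let S and T be bounded operators on ℓ^p(G/N, ℓ^p) of propagation at most r and at most s respectively. Then the lifts satisfy lift_{r+s}(ST) = lift_r(S) · lift_s(T) as operators on ℓ^p(G, ℓ^p). -/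
open Metric
open scoped ENNReal NNReal

noncomputable section

/-- `ℓ^p = ℓ^p(ℕ,ℂ)`. -/
abbrev lpSeq (p : ℝ≥0∞) := lp (fun _ : ℕ => ℂ) p

/-- `ℓ^p(Z, ℓ^p)`. -/
abbrev lpOf (p : ℝ≥0∞) [Fact (1 ≤ p)] (Z : Type) := lp (fun _ : Z => lpSeq p) p

/-- The `(x,y)` matrix entry of an operator `T` on `ℓ^p(Z,ℓ^p)`, as a map `ℓ^p → ℓ^p`:
`v ↦ (T (δ_y ⊗ v))(x)`. -/
def entry {p : ℝ≥0∞} [Fact (1 ≤ p)] {Z : Type} [DecidableEq Z]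
    (T : lpOf p Z →L[ℂ] lpOf p Z) (x y : Z) (v : lpSeq p) : lpSeq p :=
  T (lp.single p y v) x

/-- `T` has propagation at most `r` with respect to the distance function `dZ`. -/
def HasPropLE {p : ℝ≥0∞} [Fact (1 ≤ p)] {Z : Type} [DecidableEq Z]
    (dZ : Z → Z → ℝ) (T : lpOf p Z →L[ℂ] lpOf p Z) (r : ℝ) : Prop :=
  ∀ x y : Z, r < dZ x y → ∀ v : lpSeq p, entry T x y v = 0

/-- `Tt` is the lift `lift_u(T)` of an operator `T` on `ℓ^p(G/N, ℓ^p)`: its matrix entries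
are `T_{π(x),π(y)}` if `d(x,y) ≤ u` and `0` otherwise. -/
def IsLift {p : ℝ≥0∞} [Fact (1 ≤ p)] {G : Type} [Group G] [MetricSpace G] [DecidableEq G]
    (N : Subgroup G) [DecidableEq (G ⧸ N)] (u : ℝ)
    (T : lpOf p (G ⧸ N) →L[ℂ] lpOf p (G ⧸ N)) (Tt : lpOf p G →L[ℂ] lpOf p G) : Prop :=
  ∀ (x y : G) (v : lpSeq p),
    entry Tt x y v =
      if dist x y ≤ u then entry T (QuotientGroup.mk x) (QuotientGroup.mk y) v else 0

lemma lp_single_zero {p : ℝ≥0∞} [Fact (1 ≤ p)] {Z : Type} [DecidableEq Z] (y : Z) :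
    (lp.single p y (0 : lpSeq p) : lpOf p Z) = 0 := by
  refine lp.ext (funext fun j => ?_)
  by_cases h : j = y
  · subst h; rw [lp.single_apply_self]; rfl
  · rw [lp.single_apply_ne _ _ _ h]; rfl

lemma entry_zero {p : ℝ≥0∞} [Fact (1 ≤ p)] {Z : Type} [DecidableEq Z]
    (T : lpOf p Z →L[ℂ] lpOf p Z) (x y : Z) : entry T x y 0 = 0 := by
  unfold entry
  rw [lp_single_zero, map_zero]
  rfl

lemma entry_comp {p : ℝ≥0∞} [Fact (1 ≤ p)] (hp : p ≠ ∞) {Z : Type} [DecidableEq Z]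
    (A B : lpOf p Z →L[ℂ] lpOf p Z) (x y : Z) (v : lpSeq p)
    (F : Finset Z) (hF : ∀ z : Z, entry B z y v ≠ 0 → z ∈ F) :
    entry (A.comp B) x y v = ∑ z ∈ F, entry A x z (entry B z y v) := by
  have hrep : B (lp.single p y v) = ∑ z ∈ F, lp.single p z (entry B z y v) := by
    refine (lp.hasSum_single hp (B (lp.single p y v))).unique ?_
    have h0 : ∀ z ∉ F, (lp.single p z (B (lp.single p y v) z) : lpOf p Z) = 0 := by
      intro z hz
      have : entry B z y v = 0 := by
        by_contra h; exact hz (hF z h)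
      have h2 : (B (lp.single p y v) : ∀ _ : Z, lpSeq p) z = entry B z y v := rfl
      rw [h2, this, lp_single_zero]
    exact hasSum_sum_of_ne_finset_zero h0
  show A (B (lp.single p y v)) x = _
  rw [hrep, map_sum]
  rw [lp.coeFn_sum, Finset.sum_apply]
  rfl

lemma ext_of_entry {p : ℝ≥0∞} [Fact (1 ≤ p)] (hp : p ≠ ∞) {Z : Type} [DecidableEq Z]
    (A B : lpOf p Z →L[ℂ] lpOf p Z)
    (h : ∀ (x y : Z) (v : lpSeq p), entry A x y v = entry B x y v) : A = B := by
  refine ContinuousLinearMap.ext fun f => ?_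
  have hsingle : ∀ (y : Z) (v : lpSeq p), A (lp.single p y v) = B (lp.single p y v) := by
    intro y v
    apply lp.ext
    funext x
    exact h x y v
  have h1 : HasSum (fun y : Z => A (lp.single p y (f y))) (A f) :=
    A.hasSum (lp.hasSum_single hp f)
  have h2 : HasSum (fun y : Z => B (lp.single p y (f y))) (B f) :=
    B.hasSum (lp.hasSum_single hp f)
  rw [funext fun y => hsingle y (f y)] at h1
  exact h1.unique h2


/-- if `π : G → G/N` is an `ε`-metric cover and `S`, `T` are bounded operators
on `ℓ^p(G/N, ℓ^p)` of propagation at most `r` and at most `s` with `r + s < ε`, then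
`lift_{r+s}(ST) = lift_r(S) · lift_s(T)` as operators on `ℓ^p(G, ℓ^p)`. -/
theorem lift_multiplicative
    (p : ℝ≥0∞) [Fact (1 ≤ p)] (hp : p ≠ ∞)
    {G : Type} [Group G] [Countable G] [MetricSpace G] [DecidableEq G]
    (hproper : ∀ (x : G) (ρ : ℝ), (Metric.ball x ρ).Finite)
    (hinv : ∀ g x y : G, dist (g * x) (g * y) = dist x y)
    (N : Subgroup G) [DecidableEq (G ⧸ N)] (hnormal : N.Normal) (hfin : N.FiniteIndex)
    (ε : ℝ) (hcover : IsMetricCover N ε)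
    (r s : ℝ) (hr : 0 < r) (hs : 0 < s) (hrs : r + s < ε)
    (S T : lpOf p (G ⧸ N) →L[ℂ] lpOf p (G ⧸ N))
    (hS : HasPropLE (qdist N) S r) (hT : HasPropLE (qdist N) T s)
    (St Tt U : lpOf p G →L[ℂ] lpOf p G)
    (hSt : IsLift N r S St) (hTt : IsLift N s T Tt)
    (hU : IsLift N (r + s) (S.comp T) U) :
    U = St.comp Tt := by
  haveI := hfin
  haveI : Fintype (G ⧸ N) := Fintype.ofFinite _
  have hε : (0 : ℝ) < ε := by linarith
  refine ext_of_entry hp U (St.comp Tt) fun x y v => ?_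
  set F : Finset G := (hproper y (s + 1)).toFinset with hFdef
  have hmemF : ∀ z : G, dist z y ≤ s → z ∈ F := by
    intro z hz
    rw [hFdef, Set.Finite.mem_toFinset]
    exact Metric.mem_ball.mpr (by linarith)
  have hF : ∀ z : G, entry Tt z y v ≠ 0 → z ∈ F := by
    intro z hz
    by_cases hzy : dist z y ≤ s
    · exact hmemF z hzy
    · exact absurd (by rw [hTt z y v, if_neg hzy]) hz
  rw [hU x y v, entry_comp hp St Tt x y v F hF]
  by_cases hxy : dist x y ≤ r + s
  · rw [if_pos hxy,
      entry_comp hp S T _ _ v Finset.univ (fun w _ => Finset.mem_univ w)]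
    obtain ⟨hiso, hbij⟩ := hcover x
    have hxball : x ∈ ball x ε := mem_ball_self hε
    have hyball : y ∈ ball x ε := by
      rw [Metric.mem_ball, dist_comm]; linarith
    -- restrict both sums to the relevant supports
    have hL :
        ∑ z ∈ F.filter (fun z => dist x z ≤ r ∧ dist z y ≤ s),
            entry St x z (entry Tt z y v)
          = ∑ z ∈ F, entry St x z (entry Tt z y v) := by
      refine Finset.sum_filter_of_ne ?_
      intro z _ hne
      constructor
      · by_contra h
        exact hne (by rw [hSt x z _, if_neg h])
      · by_contra h
        refine hne ?_
        rw [hTt z y v, if_neg h, entry_zero]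
    have hR :
        ∑ w ∈ Finset.univ.filter
            (fun w => qdist N (QuotientGroup.mk x) w ≤ r ∧
              qdist N w (QuotientGroup.mk y) ≤ s),
            entry S (QuotientGroup.mk x) w (entry T w (QuotientGroup.mk y) v)
          = ∑ w : G ⧸ N,
            entry S (QuotientGroup.mk x) w (entry T w (QuotientGroup.mk y) v) := by
      refine Finset.sum_filter_of_ne ?_
      intro w _ hne
      constructor
      · by_contra h
        exact hne (hS _ w (lt_of_not_ge h) _)
      · by_contra h
        refine hne ?_
        rw [hT w _ (lt_of_not_ge h) v, entry_zero]
    rw [← hL, ← hR]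
    symm
    refine Finset.sum_bij (fun z _ => (QuotientGroup.mk z : G ⧸ N)) ?_ ?_ ?_ ?_
    · intro z hz
      rw [Finset.mem_filter] at hz ⊢
      obtain ⟨_, hz1, hz2⟩ := hz
      have hzball : z ∈ ball x ε := by
        rw [Metric.mem_ball, dist_comm]; linarith
      refine ⟨Finset.mem_univ _, ?_, ?_⟩
      · rw [hiso x hxball z hzball]; exact hz1
      · rw [hiso z hzball y hyball]; exact hz2
    · intro z1 hz1 z2 hz2 hzz
      rw [Finset.mem_filter] at hz1 hz2
      have h1 : z1 ∈ ball x ε := by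
        rw [Metric.mem_ball, dist_comm]; linarith [hz1.2.1]
      have h2 : z2 ∈ ball x ε := by
        rw [Metric.mem_ball, dist_comm]; linarith [hz2.2.1]
      exact hbij.injOn h1 h2 hzz
    · intro w hw
      rw [Finset.mem_filter] at hw
      obtain ⟨-, hw1, hw2⟩ := hw
      have hw' : w ∈ {b : G ⧸ N | qdist N (QuotientGroup.mk x) b < ε} := by
        simp only [Set.mem_setOf_eq]; linarith
      obtain ⟨z, hzball, hzw⟩ := hbij.surjOn hw'
      have hdxz : dist x z ≤ r := by
        rw [← hiso x hxball z hzball]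
        simp only at hzw
        rw [hzw]; exact hw1
      have hdzy : dist z y ≤ s := by
        rw [← hiso z hzball y hyball]
        simp only at hzw
        rw [hzw]; exact hw2
      refine ⟨z, Finset.mem_filter.mpr ⟨hmemF z hdzy, hdxz, hdzy⟩, hzw⟩
    · intro z hz
      rw [Finset.mem_filter] at hz
      obtain ⟨_, hz1, hz2⟩ := hz
      rw [hTt z y v, if_pos hz2, hSt x z _, if_pos hz1]
  · rw [if_neg hxy]
    symm
    refine Finset.sum_eq_zero fun z _ => ?_
    by_cases hxz : dist x z ≤ r
    · have hzy : ¬ dist z y ≤ s := by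
        intro h
        exact hxy (le_trans (dist_triangle x z y) (by linarith))
      rw [hTt z y v, if_neg hzy, entry_zero]
    · rw [hSt x z _, if_neg hxz]
end
end
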